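/- Let (S, A, P, r, γ) be a finite Markov decision process with discount factor γ ∈ [0,1), let π and π' be stationary policies, with π(·|s) absolutely continuous with respect to π'(·|s) for every state s, and let Q̂ : S × A → ℝ satisfy |Q̂(s,a) − Q^π(s,a)| ≤ ε_Q for all (s,a), where ε_Q ≥ 0. Let β > 0, and for each state s define L_s(μ) = E_{a∼μ}[Q̂(s,a)] − β·KL(π(·|s) ‖ μ) for probability distributions μ on A. Suppose there is δ ≥ 0 such that for every state s, L_s(π'(·|s)) ≥ sup_μ L_s(μ) − δ. Then for every initial state s₀ ∈ S, V^{π'}(s₀) − V^π(s₀) ≥ −(δ + 2ε_Q)/(1−γ). In particular, if δ = 0 and ε_Q = 0, then V^{π'}(s₀) ≥ V^π(s₀) for every s₀. -/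

import Mathlib

open scoped BigOperators

/-- A finite Markov decision process over state space `S` and action space `A`. -/
structure MDP (S A : Type) [Fintype S] [Fintype A] where
  /-- transition kernel: `P s a s'` is the probability of moving to `s'` from `s` under action `a` -/
  P : S → A → S → ℝ
  P_nonneg : ∀ s a s', 0 ≤ P s a s'
  P_sum_one : ∀ s a, ∑ s', P s a s' = 1
  /-- reward function -/
  r : S → A → ℝ
  /-- discount factor -/
  γ : ℝ
  γ_nonneg : 0 ≤ γ
  γ_lt_one : γ < 1

variable {S A : Type} [Fintype S] [Fintype A] [DecidableEq S]

/-- `p` is a probability distribution on a finite set. -/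
def IsProb {A : Type} [Fintype A] (p : A → ℝ) : Prop :=
  (∀ a, 0 ≤ p a) ∧ ∑ a, p a = 1

/-- A stationary policy assigns a probability distribution over actions to each state. -/
def IsPolicy (π : S → A → ℝ) : Prop :=
  ∀ s, IsProb (π s)

/-- Distribution of the state at time `t`, starting at `s₀` and following policy `π`. -/
noncomputable def stateDist (M : MDP S A) (π : S → A → ℝ) (s₀ : S) : ℕ → S → ℝ
  | 0, s => if s = s₀ then 1 else 0
  | t + 1, s' => ∑ s, ∑ a, stateDist M π s₀ t s * π s a * M.P s a s'

/-- Value function: expected discounted return of policy `π` started from `s₀`. -/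
noncomputable def V (M : MDP S A) (π : S → A → ℝ) (s₀ : S) : ℝ :=
  ∑' t : ℕ, M.γ ^ t * ∑ s, stateDist M π s₀ t s * ∑ a, π s a * M.r s a

/-- State-action value function of policy `π`. -/
noncomputable def Q (M : MDP S A) (π : S → A → ℝ) (s : S) (a : A) : ℝ :=
  M.r s a + M.γ * ∑ s', M.P s a s' * V M π s'

/-- Advantage function of policy `π`. -/
noncomputable def Adv (M : MDP S A) (π : S → A → ℝ) (s : S) (a : A) : ℝ :=
  Q M π s a - V M π s

/-- Discounted state visitation distribution of policy `π` started from `s₀`. -/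
noncomputable def dvisit (M : MDP S A) (π : S → A → ℝ) (s₀ : S) (s : S) : ℝ :=
  (1 - M.γ) * ∑' t : ℕ, M.γ ^ t * stateDist M π s₀ t s

/-- Kullback–Leibler divergence between distributions on a finite set. -/
noncomputable def KL {A : Type} [Fintype A] (p q : A → ℝ) : ℝ :=
  ∑ a, p a * Real.log (p a / q a)

/-- `p` is absolutely continuous with respect to `q`. -/
def AbsCont {A : Type} [Fintype A] (p q : A → ℝ) : Prop :=
  ∀ a, q a = 0 → p a = 0


section Helpers

variable {S A : Type} [Fintype S] [Fintype A] [DecidableEq S]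

lemma stateDist_nonneg (M : MDP S A) {π : S → A → ℝ} (hπ : IsPolicy π) (s₀ : S) :
    ∀ t s, 0 ≤ stateDist M π s₀ t s := by
  intro t
  induction t with
  | zero =>
      intro s; simp only [stateDist]; split <;> norm_num
  | succ t ih =>
      intro s'
      simp only [stateDist]
      apply Finset.sum_nonneg; intro s _
      apply Finset.sum_nonneg; intro a _
      exact mul_nonneg (mul_nonneg (ih s) ((hπ s).1 a)) (M.P_nonneg s a s')

lemma stateDist_sum_one (M : MDP S A) {π : S → A → ℝ} (hπ : IsPolicy π) (s₀ : S) :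
    ∀ t, ∑ s, stateDist M π s₀ t s = 1 := by
  intro t
  induction t with
  | zero => simp [stateDist]
  | succ t ih =>
      simp only [stateDist]
      rw [Finset.sum_comm]
      have : ∀ s ∈ Finset.univ (α := S), ∑ s' : S, ∑ a, stateDist M π s₀ t s * π s a * M.P s a s'
          = stateDist M π s₀ t s := by
        intro s _
        rw [Finset.sum_comm]
        simp only [← Finset.mul_sum, M.P_sum_one, mul_one, (hπ s).2]
      rw [Finset.sum_congr rfl this, ih]

end Helpers

section H2
variable {S A : Type} [Fintype S] [Fintype A] [DecidableEq S]

lemma chapman (M : MDP S A) (π : S → A → ℝ) (s₀ : S) :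
    ∀ t s', stateDist M π s₀ (t + 1) s'
      = ∑ s1, (∑ a, π s₀ a * M.P s₀ a s1) * stateDist M π s1 t s' := by
  intro t
  induction t with
  | zero =>
      intro s'
      simp [stateDist, ite_mul, mul_ite, Finset.sum_ite_eq, Finset.sum_ite_eq']
  | succ t ih =>
      intro s'
      have key : stateDist M π s₀ (t + 1 + 1) s'
          = ∑ s, ∑ a, stateDist M π s₀ (t+1) s * π s a * M.P s a s' := rfl
      rw [key]
      have : ∀ s ∈ Finset.univ (α := S), ∑ a, stateDist M π s₀ (t+1) s * π s a * M.P s a s'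
          = ∑ s1, ∑ a, (∑ a', π s₀ a' * M.P s₀ a' s1) * (stateDist M π s1 t s * π s a * M.P s a s') := by
        intro s _
        rw [Finset.sum_comm]
        congr 1; ext a
        rw [ih s, Finset.sum_mul, Finset.sum_mul]
        congr 1; ext s1; ring
      rw [Finset.sum_congr rfl this, Finset.sum_comm]
      congr 1; ext s1
      have : stateDist M π s1 (t+1) s' = ∑ s, ∑ a, stateDist M π s1 t s * π s a * M.P s a s' := rfl
      rw [this, Finset.mul_sum]
      congr 1; ext s
      rw [Finset.mul_sum]

lemma bounded_avg {ι : Type} [Fintype ι] (d h : ι → ℝ) (hd : ∀ s, 0 ≤ d s) (hd1 : ∑ s, d s = 1)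
    {C : ℝ} (hC : ∀ s, |h s| ≤ C) : |∑ s, d s * h s| ≤ C := by
  calc |∑ s, d s * h s| ≤ ∑ s, |d s * h s| := Finset.abs_sum_le_sum_abs _ _
    _ ≤ ∑ s, d s * C := by
        apply Finset.sum_le_sum; intro s _
        rw [abs_mul, abs_of_nonneg (hd s)]
        exact mul_le_mul_of_nonneg_left (hC s) (hd s)
    _ = C := by rw [← Finset.sum_mul, hd1, one_mul]

lemma summable_geom_bounded (M : MDP S A) (x : ℕ → ℝ) {C : ℝ} (hx : ∀ t, |x t| ≤ C) :
    Summable (fun t => M.γ ^ t * x t) := by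
  apply Summable.of_norm_bounded (g := fun t => C * M.γ ^ t)
    ((summable_geometric_of_lt_one M.γ_nonneg M.γ_lt_one).mul_left C)
  intro t
  rw [Real.norm_eq_abs, abs_mul, abs_pow, abs_of_nonneg M.γ_nonneg, mul_comm]
  exact mul_le_mul_of_nonneg_right (hx t) (pow_nonneg M.γ_nonneg t)

end H2

section H3
variable {S A : Type} [Fintype S] [Fintype A] [DecidableEq S]

noncomputable def Rmax (M : MDP S A) : ℝ := ∑ s, ∑ a, |M.r s a|

lemma abs_r_le (M : MDP S A) (s : S) (a : A) : |M.r s a| ≤ Rmax M := by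
  unfold Rmax
  have h1 : |M.r s a| ≤ ∑ a', |M.r s a'| :=
    Finset.single_le_sum (f := fun a' => |M.r s a'|) (fun a' _ => abs_nonneg _) (Finset.mem_univ a)
  exact h1.trans (Finset.single_le_sum (f := fun s' => ∑ a', |M.r s' a'|)
    (fun s' _ => Finset.sum_nonneg fun a' _ => abs_nonneg _) (Finset.mem_univ s))

lemma rbar_bound (M : MDP S A) {π : S → A → ℝ} (hπ : IsPolicy π) (s : S) :
    |∑ a, π s a * M.r s a| ≤ Rmax M :=
  bounded_avg (π s) (M.r s) (hπ s).1 (hπ s).2 (abs_r_le M s)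

lemma stage_bound (M : MDP S A) {π : S → A → ℝ} (hπ : IsPolicy π) (s₀ : S) (t : ℕ) :
    |∑ s, stateDist M π s₀ t s * ∑ a, π s a * M.r s a| ≤ Rmax M :=
  bounded_avg _ _ (stateDist_nonneg M hπ s₀ t) (stateDist_sum_one M hπ s₀ t)
    (rbar_bound M hπ)

lemma summable_V (M : MDP S A) {π : S → A → ℝ} (hπ : IsPolicy π) (s₀ : S) :
    Summable (fun t => M.γ ^ t * ∑ s, stateDist M π s₀ t s * ∑ a, π s a * M.r s a) :=
  summable_geom_bounded M _ (stage_bound M hπ s₀)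

lemma swap_helper {ι : Type} [Fintype ι] (g gt : ℝ) (q : ι → ℝ) (D : ι → ι → ℝ) (R : ι → ℝ) :
    g * gt * ∑ s', (∑ s1, q s1 * D s1 s') * R s'
      = ∑ s1, (q s1 * g) * (gt * ∑ s', D s1 s' * R s') := by
  simp only [Finset.sum_mul, Finset.mul_sum]
  rw [Finset.sum_comm]
  exact Finset.sum_congr rfl fun s1 _ => Finset.sum_congr rfl fun s' _ => by ring

lemma V_step (M : MDP S A) {π : S → A → ℝ} (hπ : IsPolicy π) (s₀ : S) :
    V M π s₀ = (∑ a, π s₀ a * M.r s₀ a)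
      + M.γ * ∑ s1, (∑ a, π s₀ a * M.P s₀ a s1) * V M π s1 := by
  have hsum : ∀ s : S, Summable
      (fun t => M.γ ^ t * ∑ s', stateDist M π s t s' * ∑ a, π s' a * M.r s' a) :=
    fun s => summable_V M hπ s
  have h0 : V M π s₀
      = (M.γ ^ 0 * ∑ s', stateDist M π s₀ 0 s' * ∑ a, π s' a * M.r s' a)
      + ∑' t, M.γ ^ (t+1) * ∑ s', stateDist M π s₀ (t+1) s' * ∑ a, π s' a * M.r s' a :=
    Summable.tsum_eq_zero_add (hsum s₀)
  have e0 : M.γ ^ 0 * ∑ s', stateDist M π s₀ 0 s' * ∑ a, π s' a * M.r s' a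
      = ∑ a, π s₀ a * M.r s₀ a := by
    simp [stateDist, ite_mul, Finset.sum_ite_eq, Finset.sum_ite_eq']
  have etail : ∀ t, M.γ ^ (t+1) * ∑ s', stateDist M π s₀ (t+1) s' * ∑ a, π s' a * M.r s' a
      = ∑ s1, ((∑ a, π s₀ a * M.P s₀ a s1) * M.γ)
          * (M.γ ^ t * ∑ s', stateDist M π s1 t s' * ∑ a, π s' a * M.r s' a) := by
    intro t
    simp only [chapman M π s₀ t]
    rw [pow_succ, mul_comm (M.γ ^ t) M.γ]
    exact swap_helper M.γ (M.γ ^ t) _ _ _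
  rw [h0, e0, tsum_congr etail, Summable.tsum_finsetSum (fun s1 _ => (hsum s1).mul_left _)]
  congr 1
  rw [Finset.mul_sum]
  apply Finset.sum_congr rfl; intro s1 _
  rw [Summable.tsum_mul_left _ (hsum s1)]
  show ((∑ a, π s₀ a * M.P s₀ a s1) * M.γ) * V M π s1
    = M.γ * ((∑ a, π s₀ a * M.P s₀ a s1) * V M π s1)
  ring

lemma V_eq_avg_Q (M : MDP S A) {π : S → A → ℝ} (hπ : IsPolicy π) (s : S) :
    V M π s = ∑ a, π s a * Q M π s a := by
  rw [V_step M hπ s]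
  unfold Q
  simp only [mul_add, Finset.sum_add_distrib, Finset.mul_sum, Finset.sum_mul]
  congr 1
  rw [Finset.sum_comm]
  exact Finset.sum_congr rfl fun a _ => Finset.sum_congr rfl fun s' _ => by ring

end H3

section H4
variable {S A : Type} [Fintype S] [Fintype A] [DecidableEq S]

lemma KL_self {A : Type} [Fintype A] (p : A → ℝ) : KL p p = 0 := by
  unfold KL
  apply Finset.sum_eq_zero
  intro a _
  by_cases h : p a = 0
  · simp [h]
  · rw [div_self h, Real.log_one, mul_zero]

lemma KL_nonneg {A : Type} [Fintype A] {p q : A → ℝ} (hp : IsProb p) (hq : IsProb q)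
    (hac : AbsCont p q) : 0 ≤ KL p q := by
  have key : ∀ a, p a - q a ≤ p a * Real.log (p a / q a) := by
    intro a
    by_cases h0 : p a = 0
    · simp only [h0, zero_mul, zero_sub]
      linarith [hq.1 a]
    · have hppos : 0 < p a := lt_of_le_of_ne (hp.1 a) (Ne.symm h0)
      have hqpos : 0 < q a := by
        rcases (hq.1 a).lt_or_eq with h | h
        · exact h
        · exact absurd (hac a h.symm) h0
      have hlog := Real.log_le_sub_one_of_pos (div_pos hqpos hppos)
      have hinv : Real.log (p a / q a) = -Real.log (q a / p a) := by
        rw [← Real.log_inv]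
        congr 1
        field_simp
      rw [hinv]
      have h1 : 1 - q a / p a ≤ -Real.log (q a / p a) := by linarith
      calc p a - q a = p a * (1 - q a / p a) := by field_simp
        _ ≤ p a * (-Real.log (q a / p a)) := mul_le_mul_of_nonneg_left h1 hppos.le
  calc (0 : ℝ) = ∑ a, (p a - q a) := by
        rw [Finset.sum_sub_distrib, hp.2, hq.2]; ring
    _ ≤ KL p q := Finset.sum_le_sum fun a _ => key a

lemma step_swap {S A : Type} [Fintype S] [Fintype A] (d : S → ℝ) (p : S → A → ℝ)
    (g : ℝ) (P : S → A → S → ℝ) (Vv : S → ℝ) :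
    ∑ s, d s * ∑ a, p s a * (g * ∑ s', P s a s' * Vv s')
      = g * ∑ s', (∑ s, ∑ a, d s * p s a * P s a s') * Vv s' := by
  simp only [Finset.mul_sum, Finset.sum_mul]
  conv_rhs => rw [Finset.sum_comm]
  apply Finset.sum_congr rfl
  intro s _
  conv_rhs => rw [Finset.sum_comm]
  exact Finset.sum_congr rfl fun a _ => Finset.sum_congr rfl fun s' _ => by ring

lemma main_bound (M : MDP S A) {π π' : S → A → ℝ} (hπ : IsPolicy π) (hπ' : IsPolicy π')
    {c : ℝ} (hgc : ∀ s : S, V M π s - c ≤ ∑ a, π' s a * Q M π s a) (s₀ : S) :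
    -(c / (1 - M.γ)) ≤ V M π' s₀ - V M π s₀ := by
  set u : ℕ → ℝ := fun t => M.γ ^ t * ∑ s, stateDist M π' s₀ t s * V M π s with hu_def
  set w : ℕ → ℝ := fun t =>
    M.γ ^ t * ∑ s, stateDist M π' s₀ t s * ∑ a, π' s a * M.r s a with hw_def
  set g : S → ℝ := fun s => (∑ a, π' s a * Q M π s a) - V M π s with hg_def
  set f : ℕ → ℝ := fun t => M.γ ^ t * ∑ s, stateDist M π' s₀ t s * g s with hf_def
  -- uniform bounds
  have hVB : ∀ s, |V M π s| ≤ ∑ s', |V M π s'| := fun s =>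
    Finset.single_le_sum (f := fun s' => |V M π s'|) (fun s' _ => abs_nonneg _)
      (Finset.mem_univ s)
  have hgB : ∀ s, |g s| ≤ ∑ s', |g s'| := fun s =>
    Finset.single_le_sum (f := fun s' => |g s'|) (fun s' _ => abs_nonneg _)
      (Finset.mem_univ s)
  have hu : Summable u := summable_geom_bounded M _ (fun t =>
    bounded_avg _ _ (stateDist_nonneg M hπ' s₀ t) (stateDist_sum_one M hπ' s₀ t) hVB)
  have husucc : Summable (fun t => u (t + 1)) := (summable_nat_add_iff 1).2 hu
  have hw : Summable w := summable_V M hπ' s₀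
  have hf : Summable f := summable_geom_bounded M _ (fun t =>
    bounded_avg _ _ (stateDist_nonneg M hπ' s₀ t) (stateDist_sum_one M hπ' s₀ t) hgB)
  -- telescoping identity
  have hfe : ∀ t, f t = w t + (u (t + 1) - u t) := by
    intro t
    have hQexp : ∑ s, stateDist M π' s₀ t s * ∑ a, π' s a * Q M π s a
        = (∑ s, stateDist M π' s₀ t s * ∑ a, π' s a * M.r s a)
          + M.γ * ∑ s', stateDist M π' s₀ (t + 1) s' * V M π s' := by
      have expand : ∀ s, ∑ a, π' s a * Q M π s a
          = (∑ a, π' s a * M.r s a) + ∑ a, π' s a * (M.γ * ∑ s', M.P s a s' * V M π s') := by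
        intro s
        unfold Q
        rw [← Finset.sum_add_distrib]
        exact Finset.sum_congr rfl fun a _ => by ring
      calc ∑ s, stateDist M π' s₀ t s * ∑ a, π' s a * Q M π s a
          = ∑ s, (stateDist M π' s₀ t s * ∑ a, π' s a * M.r s a
              + stateDist M π' s₀ t s * ∑ a, π' s a * (M.γ * ∑ s', M.P s a s' * V M π s')) := by
            apply Finset.sum_congr rfl; intro s _
            rw [expand s, mul_add]
        _ = (∑ s, stateDist M π' s₀ t s * ∑ a, π' s a * M.r s a)
            + ∑ s, stateDist M π' s₀ t s * ∑ a, π' s a * (M.γ * ∑ s', M.P s a s' * V M π s') :=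
            Finset.sum_add_distrib
        _ = (∑ s, stateDist M π' s₀ t s * ∑ a, π' s a * M.r s a)
            + M.γ * ∑ s', (∑ s, ∑ a, stateDist M π' s₀ t s * π' s a * M.P s a s') * V M π s' := by
            rw [step_swap]
        _ = _ := by
            congr 1
    have : f t = M.γ ^ t * ((∑ s, stateDist M π' s₀ t s * ∑ a, π' s a * Q M π s a)
        - ∑ s, stateDist M π' s₀ t s * V M π s) := by
      rw [hf_def]
      simp only [hg_def]
      congr 1
      rw [← Finset.sum_sub_distrib]
      exact Finset.sum_congr rfl fun s _ => by ring
    rw [this, hQexp, hw_def, hu_def]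
    simp only []
    rw [pow_succ]
    ring
  -- sum of the telescoping identity
  have hsum_eq : ∑' t, f t = V M π' s₀ - V M π s₀ := by
    have h1 : ∑' t, f t = (∑' t, w t) + ((∑' t, u (t + 1)) - ∑' t, u t) := by
      rw [tsum_congr hfe, Summable.tsum_add hw (husucc.sub hu), Summable.tsum_sub husucc hu]
    have h2 : ∑' t, u (t + 1) = (∑' t, u t) - u 0 := by
      have := Summable.tsum_eq_zero_add hu
      linarith
    have h3 : u 0 = V M π s₀ := by
      rw [hu_def]
      simp [stateDist, ite_mul, Finset.sum_ite_eq, Finset.sum_ite_eq']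
    have h4 : ∑' t, w t = V M π' s₀ := rfl
    rw [h1, h2, h3, h4]
    ring
  -- lower bound on each f t
  have hflb : ∀ t, -c * M.γ ^ t ≤ f t := by
    intro t
    have hg1 : -c ≤ ∑ s, stateDist M π' s₀ t s * g s := by
      have : ∑ s, stateDist M π' s₀ t s * (-c) ≤ ∑ s, stateDist M π' s₀ t s * g s := by
        apply Finset.sum_le_sum
        intro s _
        apply mul_le_mul_of_nonneg_left _ (stateDist_nonneg M hπ' s₀ t s)
        have := hgc s
        rw [hg_def]
        simp only []
        linarith
      calc -c = (∑ s, stateDist M π' s₀ t s) * (-c) := by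
            rw [stateDist_sum_one M hπ' s₀ t, one_mul]
        _ = ∑ s, stateDist M π' s₀ t s * (-c) := Finset.sum_mul _ _ _
        _ ≤ _ := this
    calc -c * M.γ ^ t = M.γ ^ t * (-c) := by ring
      _ ≤ M.γ ^ t * ∑ s, stateDist M π' s₀ t s * g s :=
          mul_le_mul_of_nonneg_left hg1 (pow_nonneg M.γ_nonneg t)
      _ = f t := rfl
  have hgeo : Summable (fun t => -c * M.γ ^ t) :=
    (summable_geometric_of_lt_one M.γ_nonneg M.γ_lt_one).mul_left (-c)
  have : ∑' t, (-c * M.γ ^ t) ≤ ∑' t, f t := Summable.tsum_le_tsum hflb hgeo hf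
  have hgeov : ∑' t, (-c * M.γ ^ t) = -(c / (1 - M.γ)) := by
    rw [Summable.tsum_mul_left _ (summable_geometric_of_lt_one M.γ_nonneg M.γ_lt_one),
      tsum_geometric_of_lt_one M.γ_nonneg M.γ_lt_one, div_eq_mul_inv]
    ring
  rw [← hsum_eq]
  linarith [this, hgeov.symm.le]

end H4

section H5
variable {S A : Type} [Fintype S] [Fintype A] [DecidableEq S]

lemma avg_err_bound {A : Type} [Fintype A] {μ : A → ℝ} (hμ : IsProb μ)
    {x y : A → ℝ} {ε : ℝ} (h : ∀ a, |x a - y a| ≤ ε) :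
    |(∑ a, μ a * x a) - ∑ a, μ a * y a| ≤ ε := by
  have : (∑ a, μ a * x a) - ∑ a, μ a * y a = ∑ a, μ a * (x a - y a) := by
    rw [← Finset.sum_sub_distrib]
    exact Finset.sum_congr rfl fun a _ => by ring
  rw [this]
  exact bounded_avg μ _ hμ.1 hμ.2 h

end H5
/-- Approximate KL-regularized policy improvement with uniform slack: the new policy
is worse by at most `(δ + 2 εQ) / (1 - γ)`; in particular, with no errors it improves. -/
theorem approx_kl_regularized_policy_improvement_uniform
    {S A : Type} [Fintype S] [Fintype A] [Nonempty S] [Nonempty A] [DecidableEq S]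
    (M : MDP S A) (π π' : S → A → ℝ)
    (hπ : IsPolicy π) (hπ' : IsPolicy π')
    (hac : ∀ s : S, AbsCont (π s) (π' s))
    (Qhat : S → A → ℝ) (εQ : ℝ) (hεQ : 0 ≤ εQ)
    (hQ : ∀ s a, |Qhat s a - Q M π s a| ≤ εQ)
    (β : ℝ) (hβ : 0 < β)
    (δ : ℝ) (hδ : 0 ≤ δ)
    (hopt : ∀ s : S, ∀ μ : A → ℝ, IsProb μ → AbsCont (π s) μ →
      ((∑ a, μ a * Qhat s a) - β * KL (π s) μ) - δ ≤
        (∑ a, π' s a * Qhat s a) - β * KL (π s) (π' s)) :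
    (∀ s₀ : S, -((δ + 2 * εQ) / (1 - M.γ)) ≤ V M π' s₀ - V M π s₀) ∧
      (δ = 0 → εQ = 0 → ∀ s₀ : S, V M π s₀ ≤ V M π' s₀) := by
  have hadv : ∀ s : S, V M π s - (δ + 2 * εQ) ≤ ∑ a, π' s a * Q M π s a := by
    intro s
    have h1 := hopt s (π s) (hπ s) (fun a h => h)
    rw [KL_self (π s)] at h1
    have hklnn : 0 ≤ KL (π s) (π' s) := KL_nonneg (hπ s) (hπ' s) (hac s)
    have h2 : (∑ a, π s a * Qhat s a) - δ ≤ ∑ a, π' s a * Qhat s a := by nlinarith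
    have e1 : |(∑ a, π' s a * Qhat s a) - ∑ a, π' s a * Q M π s a| ≤ εQ :=
      avg_err_bound (hπ' s) (hQ s)
    have e2 : |(∑ a, π s a * Qhat s a) - ∑ a, π s a * Q M π s a| ≤ εQ :=
      avg_err_bound (hπ s) (hQ s)
    have hV : V M π s = ∑ a, π s a * Q M π s a := V_eq_avg_Q M hπ s
    rw [hV]
    have e1' := abs_le.1 e1
    have e2' := abs_le.1 e2
    linarith [e1'.1, e1'.2, e2'.1, e2'.2]
  constructor
  · intro s₀
    exact main_bound M hπ hπ' hadv s₀
  · intro hδ0 hε0 s₀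
    have h := main_bound M hπ hπ' hadv s₀
    rw [hδ0, hε0] at h
    simp at h
    linarith
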